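/- arXiv:2001.08267 — 6 statements merged into one kernel-verified Lean document; each statement's English description precedes it below -/
import Mathlib

section
/- The vertices of the zonotope Z = ∑_{i=0}^n [0,π]e_i are the only points of Z that lie on the boundary of the permutahedron Perm; equivalently, every point of Z that is not a vertex of Z satisfies all defining inequalities of Perm strictly. -/
open Real Finset

/-!
After clearing the denominator `n + 1`, the inequality for `{I₋, I₊}` reads
`-|I₊| ∑_{I₋} x + |I₋| ∑_{I₊} x ≤ |I₋| |I₊| π`, which holds on the cube because
`∑_{I₋} x ≥ 0` and `∑_{I₊} x ≤ |I₊| π`. Equality forces `x = 0` on `I₋` and `x = π` on `I₊`,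
i.e. `x` is a vertex of `Z`.
-/

/-- `x` lies over a vertex of the image of the cube `[0, a]^ι` in `ℝ^ι / ℝ (1, …, 1)`. -/
def IsZonotopeVertex {ι : Type*} (a : ℝ) (x : ι → ℝ) : Prop :=
  ∃ c : ℝ, (∀ i, x i + c = 0 ∨ x i + c = a) ∧ ∃ i j, x i ≠ x j

section

variable {ι : Type*} {a : ℝ} {x : ι → ℝ} {s t : Finset ι}

theorem isZonotopeVertex_of_eq_zero_of_eq (ha : a ≠ 0) (hst : ∀ i, i ∈ s ∨ i ∈ t)
    (hs : s.Nonempty) (ht : t.Nonempty) (hx₀ : ∀ i ∈ s, x i = 0) (hxa : ∀ j ∈ t, x j = a) :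
    IsZonotopeVertex a x := by
  obtain ⟨i₀, hi₀⟩ := hs
  obtain ⟨j₀, hj₀⟩ := ht
  refine ⟨0, fun i => ?_, i₀, j₀, by rw [hx₀ i₀ hi₀, hxa j₀ hj₀]; exact ha.symm⟩
  rcases hst i with hi | hi
  · exact .inl (by simp [hx₀ i hi])
  · exact .inr (by simp [hxa i hi])

theorem sum_le_card_mul_of_mem_Icc (hx : ∀ i, x i ∈ Set.Icc 0 a) (t : Finset ι) :
    ∑ j ∈ t, x j ≤ #t * a := by
  simpa using sum_le_card_nsmul t x a fun j _ => (hx j).2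

theorem neg_card_mul_sum_add_card_mul_sum_le (hx : ∀ i, x i ∈ Set.Icc 0 a)
    (s t : Finset ι) :
    -(#t : ℝ) * ∑ i ∈ s, x i + #s * ∑ j ∈ t, x j ≤ #s * #t * a := by
  have hs : 0 ≤ ∑ i ∈ s, x i := sum_nonneg fun i _ => (hx i).1
  linarith [mul_nonneg (Nat.cast_nonneg (α := ℝ) #t) hs,
    mul_le_mul_of_nonneg_left (sum_le_card_mul_of_mem_Icc hx t) (Nat.cast_nonneg (α := ℝ) #s)]

theorem eq_zero_and_eq_of_neg_card_mul_sum_add_card_mul_sum_eq (hx : ∀ i, x i ∈ Set.Icc 0 a)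
    (hs : s.Nonempty) (ht : t.Nonempty)
    (h : -(#t : ℝ) * ∑ i ∈ s, x i + #s * ∑ j ∈ t, x j = #s * #t * a) :
    (∀ i ∈ s, x i = 0) ∧ ∀ j ∈ t, x j = a := by
  have hs_pos : (0 : ℝ) < #s := by exact_mod_cast hs.card_pos
  have ht_pos : (0 : ℝ) < #t := by exact_mod_cast ht.card_pos
  have hs_nonneg := mul_nonneg ht_pos.le (sum_nonneg fun i _ => (hx i).1 : 0 ≤ ∑ i ∈ s, x i)
  have ht_le := mul_le_mul_of_nonneg_left (sum_le_card_mul_of_mem_Icc hx t) hs_pos.le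
  have hs_zero : ∑ i ∈ s, x i = 0 :=
    (mul_eq_zero.mp (by linarith : (#t : ℝ) * ∑ i ∈ s, x i = 0)).resolve_left ht_pos.ne'
  have ht_eq : ∑ j ∈ t, x j = ∑ _j ∈ t, a := by
    rw [sum_const, nsmul_eq_mul]
    exact mul_left_cancel₀ hs_pos.ne' (by linarith)
  exact ⟨(sum_eq_zero_iff_of_nonneg fun i _ => (hx i).1).mp hs_zero,
    (sum_eq_sum_iff_of_le fun j _ => (hx j).2).mp ht_eq⟩

theorem neg_card_mul_sum_add_card_mul_sum_lt (hx : ∀ i, x i ∈ Set.Icc 0 a) (ha : a ≠ 0)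
    (hnv : ¬ IsZonotopeVertex a x) (hst : ∀ i, i ∈ s ∨ i ∈ t)
    (hs : s.Nonempty) (ht : t.Nonempty) :
    -(#t : ℝ) * ∑ i ∈ s, x i + #s * ∑ j ∈ t, x j < #s * #t * a := by
  refine (neg_card_mul_sum_add_card_mul_sum_le hx s t).lt_of_ne fun h => hnv ?_
  obtain ⟨hx₀, hxa⟩ := eq_zero_and_eq_of_neg_card_mul_sum_add_card_mul_sum_eq hx hs ht h
  exact isZonotopeVertex_of_eq_zero_of_eq ha hst hs ht hx₀ hxa

end

theorem zonotope_nonvertex_in_perm_interior_general (n : ℕ)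
    (x : Fin (n + 1) → ℝ) (hx : ∀ i, x i ∈ Set.Icc (0 : ℝ) π)
    (hnv : ¬ ∃ c : ℝ, (∀ i, x i + c = 0 ∨ x i + c = π) ∧ (∃ i j, x i ≠ x j)) :
    ∀ Ineg Ipos : Finset (Fin (n + 1)), Ineg.Nonempty → Ipos.Nonempty →
      Disjoint Ineg Ipos → Ineg ∪ Ipos = Finset.univ →
      -((Ipos.card : ℝ) / (n + 1)) * ∑ i ∈ Ineg, x i
          + (Ineg.card : ℝ) / (n + 1) * ∑ j ∈ Ipos, x j
        < (Ineg.card : ℝ) * Ipos.card / (n + 1) * π := by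
  intro Ineg Ipos hneg hpos _ hcover
  have hcover' : ∀ i, i ∈ Ineg ∨ i ∈ Ipos := fun i => mem_union.mp (hcover ▸ mem_univ i)
  have key := neg_card_mul_sum_add_card_mul_sum_lt hx pi_ne_zero hnv hcover' hneg hpos
  have hN : (0 : ℝ) < n + 1 := by positivity
  calc _ = (-(#Ipos : ℝ) * ∑ i ∈ Ineg, x i + #Ineg * ∑ j ∈ Ipos, x j) / (n + 1) := by ring
    _ < #Ineg * #Ipos * π / (n + 1) := div_lt_div_of_pos_right key hN
    _ = _ := by ring

/-- Points of the zonotope `Z` (the image of the cube `[0,π]^{n+1}` in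
`ℝ^{n+1}/ℝ(1,…,1)`) that are not vertices of `Z` satisfy all defining inequalities
of the permutahedron strictly.  A point of the cube maps to a vertex of `Z` iff some
translate of it by a multiple of `(1,…,1)` has all coordinates in `{0,π}` and is not
constant (i.e. does not map to `0`). -/
theorem zonotope_nonvertex_in_perm_interior (n : ℕ) (hn : 1 ≤ n)
    (x : Fin (n + 1) → ℝ) (hx : ∀ i, x i ∈ Set.Icc (0 : ℝ) π)
    (hnv : ¬ ∃ c : ℝ, (∀ i, x i + c = 0 ∨ x i + c = π) ∧ (∃ i j, x i ≠ x j)) :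
    ∀ Ineg Ipos : Finset (Fin (n + 1)), Ineg.Nonempty → Ipos.Nonempty →
      Disjoint Ineg Ipos → Ineg ∪ Ipos = Finset.univ →
      -((Ipos.card : ℝ) / (n + 1)) * ∑ i ∈ Ineg, x i
          + (Ineg.card : ℝ) / (n + 1) * ∑ j ∈ Ipos, x j
        < (Ineg.card : ℝ) * Ipos.card / (n + 1) * π :=
  zonotope_nonvertex_in_perm_interior_general n x hx hnv
end

section
/- A minimal stratum pair (V, E) with |V| = |E| = 2 on a cycle with vertices labeled by odd numbers t_1, t_3, ..., t_{2n+1} and edges labeled by even numbers t_0, t_2, ..., t_{2n} is interlacing (the two vertices of V separate the two edges of E on the cycle) if and only if the 4-element subset {t_{e_1}, t_{v_1}, t_{e_2}, t_{v_2}} ⊂ {t_0, ..., t_{2n+1}} satisfies the Gale evenness condition: between any two consecutive elements of this subset (in the cyclic order of all 2n+2 labels) there is an even number of other labels. -/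
/-!
Since `m = 2n + 2` is even, the number of labels strictly between `s` and `t` is even exactly
when `s` and `t` have opposite parity, so Gale evenness says that cyclically consecutive elements
of `S` alternate in parity. With two odd labels `a, b` and two even labels `x, y` this means that
neither `a, b` nor `x, y` are consecutive in either direction: each open arc between `a` and `b`
contains one of `x, y`, which is interlacing, and likewise with the roles of the pairs exchanged,
which is the same condition because interlacing is symmetric in the two pairs.
-/

/-- `cycBtwn m a b x`: on the cycle `ℤ/m` (labels `0,…,m-1`), the label `x` lies
strictly between `a` and `b` going counterclockwise from `a`. -/
def cycBtwn (m a b x : ℕ) : Prop :=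
  0 < (x + m - a) % m ∧ (x + m - a) % m < (b + m - a) % m

lemma add_sub_mod_eq_ite {m s x : ℕ} (hs : s < m) (hx : x < m) :
    (x + m - s) % m = if s ≤ x then x - s else x + m - s := by
  split_ifs with h
  · rw [show x + m - s = x - s + m by omega, Nat.add_mod_right, Nat.mod_eq_of_lt (by omega)]
  · exact Nat.mod_eq_of_lt (by omega)

lemma cycBtwn_iff_of_lt {m a b x : ℕ} (ha : a < m) (hb : b < m) (hx : x < m) :
    cycBtwn m a b x ↔ a < x ∧ x < b ∨ x < b ∧ b < a ∨ b < a ∧ a < x := by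
  rw [cycBtwn, add_sub_mod_eq_ite ha hx, add_sub_mod_eq_ite ha hb]
  split_ifs <;> omega

lemma not_cycBtwn_left (m a b : ℕ) : ¬ cycBtwn m a b a := by
  simp [cycBtwn]

lemma not_cycBtwn_right (m a b : ℕ) : ¬ cycBtwn m a b b := fun h => h.2.false

lemma cycBtwn_swap_iff {m a b x : ℕ} (ha : a < m) (hb : b < m) (hx : x < m)
    (hab : a ≠ b) (hxa : x ≠ a) (hxb : x ≠ b) :
    cycBtwn m b a x ↔ ¬ cycBtwn m a b x := by
  rw [cycBtwn_iff_of_lt hb ha hx, cycBtwn_iff_of_lt ha hb hx]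
  omega

lemma xor_cycBtwn_comm {m a b x y : ℕ} (ha : a < m) (hb : b < m) (hx : x < m) (hy : y < m)
    (hax : a ≠ x) (hay : a ≠ y) (hbx : b ≠ x) (hby : b ≠ y) :
    Xor (cycBtwn m a b x) (cycBtwn m a b y) ↔ Xor (cycBtwn m x y a) (cycBtwn m x y b) := by
  simp only [cycBtwn_iff_of_lt, ha, hb, hx, hy, xor_iff_or_and_not_and]
  omega

lemma xor_cycBtwn_iff_exists {m a b x y : ℕ} (ha : a < m) (hb : b < m) (hx : x < m) (hy : y < m)
    (hab : a ≠ b) (hax : a ≠ x) (hay : a ≠ y) (hbx : b ≠ x) (hby : b ≠ y) :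
    Xor (cycBtwn m a b x) (cycBtwn m a b y) ↔
      (∃ u ∈ ({x, a, y, b} : Finset ℕ), cycBtwn m a b u) ∧
        ∃ u ∈ ({x, a, y, b} : Finset ℕ), cycBtwn m b a u := by
  simp only [Finset.mem_insert, Finset.mem_singleton, exists_eq_or_imp, exists_eq_left,
    not_cycBtwn_left, not_cycBtwn_right, false_or, or_false,
    cycBtwn_swap_iff ha hb hx hab hax.symm hbx.symm,
    cycBtwn_swap_iff ha hb hy hab hay.symm hby.symm,
    xor_iff_or_and_not_and, not_and_or]

lemma even_add_sub_mod_sub_one_iff {m s t : ℕ} (hm : Even m) (hs : s < m) (ht : t < m)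
    (hst : s ≠ t) : Even ((t + m - s) % m - 1) ↔ s % 2 ≠ t % 2 := by
  rw [add_sub_mod_eq_ite hs ht, Nat.even_iff]
  obtain ⟨k, rfl⟩ := hm
  split_ifs <;> omega

def IsGaleEven (m : ℕ) (S : Finset ℕ) : Prop :=
  ∀ s ∈ S, ∀ t ∈ S, s ≠ t → (∀ u ∈ S, ¬ cycBtwn m s t u) → Even ((t + m - s) % m - 1)

lemma isGaleEven_iff_mod_two_ne {m : ℕ} {S : Finset ℕ} (hm : Even m) (hS : ∀ s ∈ S, s < m) :
    IsGaleEven m S ↔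
      ∀ s ∈ S, ∀ t ∈ S, s ≠ t → (∀ u ∈ S, ¬ cycBtwn m s t u) → s % 2 ≠ t % 2 := by
  refine forall₂_congr fun s hs => forall₂_congr fun t ht => ?_
  exact forall_congr' fun hst => imp_congr_right fun _ =>
    even_add_sub_mod_sub_one_iff hm (hS s hs) (hS t ht) hst

lemma isGaleEven_four_iff {m a b x y : ℕ} (hm : Even m) (ha : a < m) (hb : b < m) (hx : x < m)
    (hy : y < m) (hab : a ≠ b) (hxy : x ≠ y) (hpab : a % 2 = b % 2) (hpxy : x % 2 = y % 2)
    (hpax : a % 2 ≠ x % 2) :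
    IsGaleEven m {x, a, y, b} ↔
      ((∃ u ∈ ({x, a, y, b} : Finset ℕ), cycBtwn m a b u) ∧
        ∃ u ∈ ({x, a, y, b} : Finset ℕ), cycBtwn m b a u) ∧
      ((∃ u ∈ ({x, a, y, b} : Finset ℕ), cycBtwn m x y u) ∧
        ∃ u ∈ ({x, a, y, b} : Finset ℕ), cycBtwn m y x u) := by
  have hS : ∀ s ∈ ({x, a, y, b} : Finset ℕ), s < m := by simp [*]
  rw [isGaleEven_iff_mod_two_ne hm hS]
  constructor
  · intro h
    refine ⟨⟨?_, ?_⟩, ?_, ?_⟩ <;> by_contra! hempty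
    exacts [h a (by simp) b (by simp) hab hempty hpab,
      h b (by simp) a (by simp) hab.symm hempty hpab.symm,
      h x (by simp) y (by simp) hxy hempty hpxy,
      h y (by simp) x (by simp) hxy.symm hempty hpxy.symm]
  · rintro ⟨⟨arc_ab, arc_ba⟩, arc_xy, arc_yx⟩ s hs t ht hst hempty
    have nonempty_arc : ∀ {s t}, (∃ u ∈ ({x, a, y, b} : Finset ℕ), cycBtwn m s t u) →
        ¬ ∀ u ∈ ({x, a, y, b} : Finset ℕ), ¬ cycBtwn m s t u :=
      fun ⟨u, hu, hc⟩ h => h u hu hc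
    simp only [Finset.mem_insert, Finset.mem_singleton] at hs ht
    -- each ordered pair is equal, of opposite parity, or one of the four pairs with a nonempty arc
    rcases hs with rfl | rfl | rfl | rfl <;> rcases ht with rfl | rfl | rfl | rfl <;>
      first | omega | exact absurd hempty (nonempty_arc ‹_›)

lemma xor_cycBtwn_iff_isGaleEven {m a b x y : ℕ} (hm : Even m) (ha : a < m) (hb : b < m)
    (hx : x < m) (hy : y < m) (hab : a ≠ b) (hxy : x ≠ y) (hpab : a % 2 = b % 2)
    (hpxy : x % 2 = y % 2) (hpax : a % 2 ≠ x % 2) :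
    Xor (cycBtwn m a b x) (cycBtwn m a b y) ↔ IsGaleEven m {x, a, y, b} := by
  have hax : a ≠ x := fun h => hpax (congrArg (· % 2) h)
  have hay : a ≠ y := fun h => hpax (h ▸ hpxy.symm)
  have hbx : b ≠ x := fun h => hpax (hpab ▸ congrArg (· % 2) h)
  have hby : b ≠ y := fun h => hpax (hpab ▸ h ▸ hpxy.symm)
  have arcs_xy : ((∃ u ∈ ({x, a, y, b} : Finset ℕ), cycBtwn m x y u) ∧
      ∃ u ∈ ({x, a, y, b} : Finset ℕ), cycBtwn m y x u) ↔
      Xor (cycBtwn m x y a) (cycBtwn m x y b) := by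
    rw [Finset.insert_comm x a, Finset.pair_comm y b]
    exact (xor_cycBtwn_iff_exists hx hy ha hb hxy hax.symm hbx.symm hay.symm hby.symm).symm
  rw [isGaleEven_four_iff hm ha hb hx hy hab hxy hpab hpxy hpax, arcs_xy,
    ← xor_cycBtwn_comm ha hb hx hy hax hay hbx hby,
    ← xor_cycBtwn_iff_exists ha hb hx hy hab hax hay hbx hby, and_self]

theorem interlacing_iff_gale_evenness_general (n : ℕ)
    (v₁ v₂ e₁ e₂ : Fin (n + 1)) (hv : v₁ ≠ v₂) (he : e₁ ≠ e₂) :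
    let m := 2 * n + 2
    let pv : Fin (n + 1) → ℕ := fun v => 2 * v.val + 1
    let pe : Fin (n + 1) → ℕ := fun e => 2 * e.val
    let S : Finset ℕ := {pe e₁, pv v₁, pe e₂, pv v₂}
    (Xor' (cycBtwn m (pv v₁) (pv v₂) (pe e₁)) (cycBtwn m (pv v₁) (pv v₂) (pe e₂)))
      ↔ (∀ s ∈ S, ∀ t ∈ S, s ≠ t → (∀ u ∈ S, ¬ cycBtwn m s t u) →
          Even ((t + m - s) % m - 1)) := by
  dsimp only
  have hv' : v₁.val ≠ v₂.val := Fin.val_ne_of_ne hv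
  have he' : e₁.val ≠ e₂.val := Fin.val_ne_of_ne he
  have := v₁.isLt
  have := v₂.isLt
  have := e₁.isLt
  have := e₂.isLt
  exact xor_cycBtwn_iff_isGaleEven ⟨n + 1, by omega⟩ (by omega) (by omega) (by omega) (by omega)
    (by omega) (by omega) (by omega) (by omega) (by omega)

/-- On an `(n+1)`-cycle, label the edge `z_i` by `t_{2i}` and the vertex between
`z_i` and `z_{i+1}` by `t_{2i+1}`.  A minimal pair `(V,E)` with `V = {v₁,v₂}`,
`E = {e₁,e₂}` is interlacing (the two vertices separate the two edges) iff the
4-element subset `{t_{2e₁}, t_{2v₁+1}, t_{2e₂}, t_{2v₂+1}}` of the `2n+2` cyclically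
ordered labels satisfies Gale's evenness condition: between any two of its
cyclically consecutive elements lies an even number of other labels. -/
theorem interlacing_iff_gale_evenness (n : ℕ) (hn : 1 ≤ n)
    (v₁ v₂ e₁ e₂ : Fin (n + 1)) (hv : v₁ ≠ v₂) (he : e₁ ≠ e₂) :
    let m := 2 * n + 2
    let pv : Fin (n + 1) → ℕ := fun v => 2 * v.val + 1
    let pe : Fin (n + 1) → ℕ := fun e => 2 * e.val
    let S : Finset ℕ := {pe e₁, pv v₁, pe e₂, pv v₂}
    (Xor' (cycBtwn m (pv v₁) (pv v₂) (pe e₁)) (cycBtwn m (pv v₁) (pv v₂) (pe e₂)))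
      ↔ (∀ s ∈ S, ∀ t ∈ S, s ≠ t → (∀ u ∈ S, ¬ cycBtwn m s t u) →
          Even ((t + m - s) % m - 1)) :=
  interlacing_iff_gale_evenness_general n v₁ v₂ e₁ e₂ hv he
end

section
/- The tropical hyperplane S = {x ∈ Δ : there exist i ≠ j with x_i = x_j ≥ x_k for all k} is a deformation retract of the hypersimplex A = {x ∈ Δ : x_i ≤ 1/2 for all i}; in particular S ⊆ A and both are connected, and they are homotopy equivalent. -/
open Finset

/-!
Replacing every coordinate `x i` by `min (x i) m`, where `m` is the second largest coordinate,
lowers only a unique maximal coordinate, down to the level of the runner-up; after renormalizing,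
the maximum is attained twice. On the hypersimplex `m > 0`, so this is a continuous retraction onto
the tropical hyperplane, and it is homotopic to the identity because the hypersimplex is convex.
The tropical hyperplane is connected as the continuous image of the convex hypersimplex.
-/

theorem ContinuousMap.homotopic_of_contractibleSpace {X Y : Type*} [TopologicalSpace X]
    [TopologicalSpace Y] [ContractibleSpace Y] (f g : C(X, Y)) : f.Homotopic g := by
  obtain ⟨y, hy⟩ := id_nullhomotopic Y
  have homotopic_const (h : C(X, Y)) : h.Homotopic (.const X y) := hy.comp (.refl h)
  exact (homotopic_const f).trans (homotopic_const g).symm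

namespace TropicalHyperplane

variable {ι : Type*}

def MaxAttainedTwice (x : ι → ℝ) : Prop := ∃ i j, i ≠ j ∧ x i = x j ∧ ∀ k, x k ≤ x i

theorem MaxAttainedTwice.smul {x : ι → ℝ} (hx : MaxAttainedTwice x) {c : ℝ} (hc : 0 ≤ c) :
    MaxAttainedTwice (c • x) := by
  obtain ⟨i, j, hij, hxij, hmax⟩ := hx
  exact ⟨i, j, hij, by simp [hxij], fun k => by simpa using mul_le_mul_of_nonneg_left (hmax k) hc⟩

variable [Fintype ι]

variable (ι) in
def hypersimplex : Set (ι → ℝ) := {x ∈ stdSimplex ℝ ι | ∀ i, x i ≤ 1 / 2}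

variable (ι) in
def tropicalHyperplane : Set (ι → ℝ) := {x ∈ stdSimplex ℝ ι | MaxAttainedTwice x}

theorem tropicalHyperplane_subset_hypersimplex : tropicalHyperplane ι ⊆ hypersimplex ι := by
  classical
  rintro x ⟨hx, i, j, hij, hxij, hmax⟩
  have hpair : x i + x j ≤ ∑ k, x k := by
    rw [← sum_pair hij]
    exact sum_le_sum_of_subset_of_nonneg (subset_univ _) fun k _ _ => hx.1 k
  refine ⟨hx, fun k => (hmax k).trans ?_⟩
  linarith [hx.2]

theorem convex_hypersimplex : Convex ℝ (hypersimplex ι) := by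
  have : hypersimplex ι = stdSimplex ℝ ι ∩ ⋂ i, {x | x i ≤ 1 / 2} := by
    ext; simp [hypersimplex]
  rw [this]
  exact (convex_stdSimplex ℝ ι).inter
    (convex_iInter fun i => convex_halfSpace_le (LinearMap.proj i).isLinear _)

theorem hypersimplex_nonempty [Nontrivial ι] : (hypersimplex ι).Nonempty := by
  have hcard : (2 : ℝ) ≤ Fintype.card ι := by exact_mod_cast Fintype.one_lt_card (α := ι)
  refine ⟨fun _ => (Fintype.card ι : ℝ)⁻¹, ⟨fun _ => by positivity, ?_⟩, fun _ => ?_⟩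
  · simp
  · rw [one_div]
    exact inv_anti₀ two_pos hcard

theorem isConnected_hypersimplex [Nontrivial ι] : IsConnected (hypersimplex ι) :=
  convex_hypersimplex.isConnected hypersimplex_nonempty

variable [DecidableEq ι] [Nontrivial ι]

/-- Deleting `x i` lowers the maximum only if `x i` is the unique maximal coordinate, so this is
the second largest coordinate, counted with multiplicity. -/
noncomputable def secondMax (x : ι → ℝ) : ℝ :=
  univ.inf' univ_nonempty fun i => (univ.erase i).sup' univ_nontrivial.erase_nonempty x

theorem exists_ne_secondMax_le (x : ι → ℝ) (i : ι) : ∃ j, j ≠ i ∧ secondMax x ≤ x j := by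
  obtain ⟨j, hj, hsup⟩ := exists_mem_eq_sup' univ_nontrivial.erase_nonempty x
  exact ⟨j, (mem_erase.1 hj).1, hsup ▸ inf'_le _ (mem_univ i)⟩

theorem MaxAttainedTwice.le_secondMax {x : ι → ℝ} (hx : MaxAttainedTwice x) (k : ι) :
    x k ≤ secondMax x := by
  obtain ⟨i, j, hij, hxij, hmax⟩ := hx
  refine (hmax k).trans (le_inf' _ _ fun l _ => ?_)
  by_cases hil : i = l
  · subst hil
    exact hxij.le.trans (le_sup' x (mem_erase.2 ⟨hij.symm, mem_univ j⟩))
  · exact le_sup' x (mem_erase.2 ⟨hil, mem_univ i⟩)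

theorem secondMax_pos {x : ι → ℝ} (hx : x ∈ hypersimplex ι) : 0 < secondMax x := by
  refine (lt_inf'_iff _).2 fun i _ => ?_
  by_contra! hle
  have hzero : ∀ j ∈ univ.erase i, x j = 0 := fun j hj =>
    le_antisymm ((le_sup' x hj).trans hle) (hx.1.1 j)
  have hxi : x i = 1 := by
    rw [← hx.1.2, ← add_sum_erase _ _ (mem_univ i), sum_eq_zero hzero, add_zero]
  linarith [hx.2 i]

theorem continuous_secondMax : Continuous (secondMax (ι := ι)) :=
  Continuous.finset_inf'_apply _ fun _ _ =>
    Continuous.finset_sup'_apply _ fun j _ => continuous_apply j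

noncomputable def truncate (x : ι → ℝ) : ι → ℝ := fun i => min (x i) (secondMax x)

theorem truncate_le_secondMax (x : ι → ℝ) (k : ι) : truncate x k ≤ secondMax x :=
  min_le_right _ _

theorem exists_truncate_eq_secondMax (x : ι → ℝ) :
    ∃ i j, i ≠ j ∧ truncate x i = secondMax x ∧ truncate x j = secondMax x := by
  obtain ⟨i, -, hi⟩ := exists_mem_eq_sup' univ_nonempty x
  obtain ⟨j, hji, hj⟩ := exists_ne_secondMax_le x i
  have hi : secondMax x ≤ x i := hj.trans (hi ▸ le_sup' x (mem_univ j))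
  exact ⟨i, j, hji.symm, min_eq_right hi, min_eq_right hj⟩

theorem maxAttainedTwice_truncate (x : ι → ℝ) : MaxAttainedTwice (truncate x) := by
  obtain ⟨i, j, hij, hi, hj⟩ := exists_truncate_eq_secondMax x
  exact ⟨i, j, hij, hi.trans hj.symm, fun k => hi ▸ truncate_le_secondMax x k⟩

theorem truncate_nonneg {x : ι → ℝ} (hx : x ∈ hypersimplex ι) (k : ι) : 0 ≤ truncate x k :=
  le_min (hx.1.1 k) (secondMax_pos hx).le

theorem sum_truncate_pos {x : ι → ℝ} (hx : x ∈ hypersimplex ι) : 0 < ∑ k, truncate x k := by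
  obtain ⟨i, -, -, hi, -⟩ := exists_truncate_eq_secondMax x
  calc 0 < truncate x i := hi ▸ secondMax_pos hx
    _ ≤ ∑ k, truncate x k := single_le_sum (fun k _ => truncate_nonneg hx k) (mem_univ i)

theorem MaxAttainedTwice.truncate_eq {x : ι → ℝ} (hx : MaxAttainedTwice x) : truncate x = x :=
  funext fun k => min_eq_left (hx.le_secondMax k)

theorem continuous_truncate : Continuous (truncate (ι := ι)) :=
  continuous_pi fun i => (continuous_apply i).min continuous_secondMax

noncomputable def retraction (x : ι → ℝ) : ι → ℝ := (∑ k, truncate x k)⁻¹ • truncate x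

theorem retraction_mem_tropicalHyperplane {x : ι → ℝ} (hx : x ∈ hypersimplex ι) :
    retraction x ∈ tropicalHyperplane ι := by
  have hsum := sum_truncate_pos hx
  refine ⟨⟨fun k => mul_nonneg (inv_nonneg.2 hsum.le) (truncate_nonneg hx k), ?_⟩,
    (maxAttainedTwice_truncate x).smul (inv_nonneg.2 hsum.le)⟩
  simp only [retraction, Pi.smul_apply, smul_eq_mul, ← mul_sum]
  exact inv_mul_cancel₀ hsum.ne'

theorem retraction_eq_self {x : ι → ℝ} (hx : x ∈ tropicalHyperplane ι) : retraction x = x := by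
  rw [retraction, hx.2.truncate_eq, hx.1.2, inv_one, one_smul]

theorem continuousOn_retraction : ContinuousOn (retraction (ι := ι)) (hypersimplex ι) :=
  ((continuous_finsetSum _ fun k _ => (continuous_apply k).comp continuous_truncate).continuousOn
    |>.inv₀ fun _ hx => (sum_truncate_pos hx).ne').smul continuous_truncate.continuousOn

theorem image_retraction_hypersimplex :
    retraction '' hypersimplex ι = tropicalHyperplane ι := by
  refine Set.Subset.antisymm
    (Set.image_subset_iff.2 fun x hx => retraction_mem_tropicalHyperplane hx) fun x hx => ⟨x, tropicalHyperplane_subset_hypersimplex hx, retraction_eq_self hx⟩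

theorem isConnected_tropicalHyperplane : IsConnected (tropicalHyperplane ι) :=
  image_retraction_hypersimplex (ι := ι) ▸
    isConnected_hypersimplex.image _ continuousOn_retraction

noncomputable def hypersimplexRetraction : C(hypersimplex ι, hypersimplex ι) where
  toFun x := ⟨retraction x, tropicalHyperplane_subset_hypersimplex
    (retraction_mem_tropicalHyperplane x.2)⟩
  continuous_toFun :=
    (continuousOn_retraction.comp_continuous continuous_subtype_val Subtype.prop).subtype_mk _

end TropicalHyperplane

open TropicalHyperplane in
/-- The tropical hyperplane `S` (points of the simplex where the maximum coordinate
is attained at least twice) is a deformation retract of the hypersimplex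
`A = {x ∈ Δ : x_i ≤ 1/2}`: `S ⊆ A`, both are connected, and there is a retraction
`r : A → A` with image in `S`, fixing `S`, homotopic to the identity (in particular
`S` and `A` are homotopy equivalent). -/
theorem tropical_hyperplane_deformation_retract (n : ℕ) (hn : 2 ≤ n) :
    let Δ : Set (Fin (n + 1) → ℝ) := {x | (∀ i, 0 ≤ x i) ∧ ∑ i, x i = 1}
    let A : Set (Fin (n + 1) → ℝ) := {x ∈ Δ | ∀ i, x i ≤ 1 / 2}
    let S : Set (Fin (n + 1) → ℝ) :=
      {x ∈ Δ | ∃ i j, i ≠ j ∧ x i = x j ∧ ∀ k, x k ≤ x i}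
    S ⊆ A ∧ IsConnected S ∧ IsConnected A ∧
      ∃ r : ContinuousMap A A,
        (∀ x : A, ((r x : A) : Fin (n + 1) → ℝ) ∈ S) ∧
        (∀ x : A, (x : Fin (n + 1) → ℝ) ∈ S → r x = x) ∧
        ContinuousMap.Homotopic r (ContinuousMap.id A) := by
  intro Δ A S
  have : Nontrivial (Fin (n + 1)) := Fin.nontrivial_iff_two_le.2 (by omega)
  have : ContractibleSpace A := convex_hypersimplex.contractibleSpace hypersimplex_nonempty
  exact ⟨tropicalHyperplane_subset_hypersimplex, isConnected_tropicalHyperplane,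
    isConnected_hypersimplex, hypersimplexRetraction,
    fun x => retraction_mem_tropicalHyperplane x.2,
    fun x hx => Subtype.ext (retraction_eq_self hx),
    ContinuousMap.homotopic_of_contractibleSpace _ _⟩
end

section
/- Every point of the hypersimplex A = {x ∈ Δ : x_i ≤ 1/2} at which some coordinate attains the maximum value twice satisfies max_i x_i ≤ 1/2; conversely every point of Δ with a unique maximal coordinate x_m can be moved along the segment decreasing x_m (redistributing proportionally to the others) until the maximum is attained twice, staying within A if it started in A. Consequently S ⊆ A and the retraction x ↦ r(x) along these segments is continuous on A. -/
open Finset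

/-! Cap every coordinate at the second largest one, `min (x k) (secondMax x)`, and renormalise.
The capped vector attains its maximum twice, and points where the maximum is already attained
twice are left unchanged. On `A` the normalising sum is at least `2 * secondMax x > 0`, which
keeps the image in `A` and makes the map continuous. When the maximum `x m` is unique, only that
coordinate is lowered, so the image lies on the segment of the statement: the other coordinates
are scaled by the inverse of the normalising sum, which is at most `1`. -/

variable {ι : Type*} [Fintype ι]

def MaxAttainedTwice (x : ι → ℝ) : Prop :=
  ∃ i j, i ≠ j ∧ x i = x j ∧ ∀ k, x k ≤ x i

def halfHypersimplex (ι : Type*) [Fintype ι] : Set (ι → ℝ) :=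
  {x ∈ stdSimplex ℝ ι | ∀ i, x i ≤ 1 / 2}

theorem convex_halfHypersimplex : Convex ℝ (halfHypersimplex ι) :=
  (convex_stdSimplex ℝ ι).inter (convex_Iic (1 / 2 : ι → ℝ))

theorem MaxAttainedTwice.le_half {x : ι → ℝ} (h : MaxAttainedTwice x)
    (hx : x ∈ stdSimplex ℝ ι) (k : ι) : x k ≤ 1 / 2 := by
  classical
  obtain ⟨i, j, hij, hxij, hmax⟩ := h
  have hpair : x i + x j ≤ 1 := by
    rw [← sum_pair hij, ← hx.2]
    exact sum_le_sum_of_subset_of_nonneg (subset_univ _) fun l _ _ => hx.1 l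
  linarith [hmax k]

theorem MaxAttainedTwice.mem_halfHypersimplex {x : ι → ℝ} (h : MaxAttainedTwice x)
    (hx : x ∈ stdSimplex ℝ ι) : x ∈ halfHypersimplex ι :=
  ⟨hx, h.le_half hx⟩

variable [Nontrivial ι]

theorem univ_offDiag_nonempty : (univ : Finset ι).offDiag.Nonempty :=
  let ⟨i, j, hij⟩ := exists_pair_ne ι
  ⟨(i, j), mem_offDiag.2 ⟨mem_univ i, mem_univ j, hij⟩⟩

noncomputable def secondMax (x : ι → ℝ) : ℝ :=
  univ.offDiag.sup' univ_offDiag_nonempty fun p => min (x p.1) (x p.2)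

theorem min_le_secondMax (x : ι → ℝ) {i j : ι} (hij : i ≠ j) :
    min (x i) (x j) ≤ secondMax x :=
  le_sup' (b := (i, j)) (fun p : ι × ι => min (x p.1) (x p.2))
    (mem_offDiag.2 ⟨mem_univ i, mem_univ j, hij⟩)

theorem exists_secondMax_eq (x : ι → ℝ) : ∃ i j, i ≠ j ∧ secondMax x = min (x i) (x j) := by
  obtain ⟨p, hp, hpx⟩ := exists_mem_eq_sup' univ_offDiag_nonempty
    fun p : ι × ι => min (x p.1) (x p.2)
  exact ⟨p.1, p.2, (mem_offDiag.1 hp).2.2, hpx⟩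

theorem secondMax_le (x : ι → ℝ) (i : ι) (hmax : ∀ k, x k ≤ x i) : secondMax x ≤ x i :=
  sup'_le _ _ fun p _ => (min_le_left _ _).trans (hmax p.1)

theorem continuous_secondMax : Continuous (secondMax : (ι → ℝ) → ℝ) :=
  Continuous.finset_sup'_apply _ fun p _ => (continuous_apply p.1).min (continuous_apply p.2)

theorem secondMax_nonneg {x : ι → ℝ} (hx : ∀ i, 0 ≤ x i) : 0 ≤ secondMax x :=
  let ⟨i, j, hij⟩ := exists_pair_ne ι
  (le_min (hx i) (hx j)).trans (min_le_secondMax x hij)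

theorem secondMax_pos {x : ι → ℝ} (hx : x ∈ halfHypersimplex ι) : 0 < secondMax x := by
  obtain ⟨i, hmax⟩ := Finite.exists_max x
  -- otherwise all the mass `1` would sit on the coordinate `i`, which is at most `1 / 2`
  obtain ⟨k, hki, hk⟩ : ∃ k, k ≠ i ∧ 0 < x k := by
    by_contra! h
    have hsum : ∑ k, x k = x i :=
      sum_eq_single i (fun k _ hki => (h k hki).antisymm (hx.1.1 k)) (by simp)
    linarith [hx.1.2, hx.2 i]
  calc 0 < x k := hk
    _ = min (x i) (x k) := (min_eq_right (hmax k)).symm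
    _ ≤ secondMax x := min_le_secondMax x hki.symm

theorem MaxAttainedTwice.secondMax_eq {x : ι → ℝ} (h : MaxAttainedTwice x) :
    ∃ i, secondMax x = x i ∧ ∀ k, x k ≤ x i := by
  obtain ⟨i, j, hij, hxij, hmax⟩ := h
  refine ⟨i, (secondMax_le x i hmax).antisymm ?_, hmax⟩
  simpa [← hxij] using min_le_secondMax x hij

noncomputable def capSecondMax (x : ι → ℝ) (k : ι) : ℝ :=
  min (x k) (secondMax x)

theorem exists_capSecondMax_eq_secondMax (x : ι → ℝ) :
    ∃ i j, i ≠ j ∧ capSecondMax x i = secondMax x ∧ capSecondMax x j = secondMax x := by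
  obtain ⟨i, j, hij, hsec⟩ := exists_secondMax_eq x
  exact ⟨i, j, hij, min_eq_right (hsec.trans_le (min_le_left _ _)),
    min_eq_right (hsec.trans_le (min_le_right _ _))⟩

theorem capSecondMax_nonneg {x : ι → ℝ} (hx : ∀ i, 0 ≤ x i) (k : ι) : 0 ≤ capSecondMax x k :=
  le_min (hx k) (secondMax_nonneg hx)

theorem capSecondMax_le_secondMax (x : ι → ℝ) (k : ι) : capSecondMax x k ≤ secondMax x :=
  min_le_right _ _

theorem continuous_capSecondMax : Continuous (capSecondMax : (ι → ℝ) → ι → ℝ) :=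
  continuous_pi fun k => (continuous_apply k).min continuous_secondMax

theorem two_mul_secondMax_le_sum_capSecondMax {x : ι → ℝ} (hx : ∀ i, 0 ≤ x i) :
    2 * secondMax x ≤ ∑ k, capSecondMax x k := by
  classical
  obtain ⟨i, j, hij, hi, hj⟩ := exists_capSecondMax_eq_secondMax x
  calc 2 * secondMax x = ∑ k ∈ {i, j}, capSecondMax x k := by rw [sum_pair hij, hi, hj]; ring
    _ ≤ ∑ k, capSecondMax x k :=
      sum_le_sum_of_subset_of_nonneg (subset_univ _) fun k _ _ => capSecondMax_nonneg hx k

theorem sum_capSecondMax_pos {x : ι → ℝ} (hx : x ∈ halfHypersimplex ι) :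
    0 < ∑ k, capSecondMax x k := by
  linarith [two_mul_secondMax_le_sum_capSecondMax hx.1.1, secondMax_pos hx]

theorem sum_capSecondMax_le_one {x : ι → ℝ} (hx : x ∈ stdSimplex ℝ ι) :
    ∑ k, capSecondMax x k ≤ 1 :=
  (sum_le_sum fun _ _ => min_le_left _ _).trans_eq hx.2

noncomputable def retractToMaxTwice (x : ι → ℝ) : ι → ℝ :=
  (∑ k, capSecondMax x k)⁻¹ • capSecondMax x

theorem retractToMaxTwice_mem {x : ι → ℝ} (hx : x ∈ halfHypersimplex ι) :
    retractToMaxTwice x ∈ halfHypersimplex ι := by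
  have hpos := sum_capSecondMax_pos hx
  refine ⟨⟨fun k => mul_nonneg (inv_nonneg.2 hpos.le) (capSecondMax_nonneg hx.1.1 k), ?_⟩,
    fun k => ?_⟩
  · simp only [retractToMaxTwice, Pi.smul_apply, smul_eq_mul, ← mul_sum]
    exact inv_mul_cancel₀ hpos.ne'
  · simp only [retractToMaxTwice, Pi.smul_apply, smul_eq_mul]
    rw [inv_mul_le_iff₀ hpos]
    linarith [capSecondMax_le_secondMax x k, two_mul_secondMax_le_sum_capSecondMax hx.1.1]

theorem maxAttainedTwice_retractToMaxTwice {x : ι → ℝ} (hx : ∀ i, 0 ≤ x i) :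
    MaxAttainedTwice (retractToMaxTwice x) := by
  obtain ⟨i, j, hij, hi, hj⟩ := exists_capSecondMax_eq_secondMax x
  refine ⟨i, j, hij, by simp only [retractToMaxTwice, Pi.smul_apply, hi, hj], fun k => ?_⟩
  simp only [retractToMaxTwice, Pi.smul_apply, smul_eq_mul, hi]
  exact mul_le_mul_of_nonneg_left (capSecondMax_le_secondMax x k)
    (inv_nonneg.2 (sum_nonneg fun l _ => capSecondMax_nonneg hx l))

theorem retractToMaxTwice_eq_self {x : ι → ℝ} (hx : x ∈ stdSimplex ℝ ι)
    (h : MaxAttainedTwice x) : retractToMaxTwice x = x := by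
  obtain ⟨i, hsec, hmax⟩ := h.secondMax_eq
  have hcap : capSecondMax x = x := funext fun k => min_eq_left (hsec ▸ hmax k)
  simp [retractToMaxTwice, hcap, hx.2]

theorem continuousOn_retractToMaxTwice :
    ContinuousOn (retractToMaxTwice : (ι → ℝ) → ι → ℝ) (halfHypersimplex ι) :=
  ((continuous_finsetSum _ fun k _ => (continuous_apply k).comp
    continuous_capSecondMax).continuousOn.inv₀ fun _ hx => (sum_capSecondMax_pos hx).ne').smul
    continuous_capSecondMax.continuousOn

noncomputable def retractToMaxTwiceMap : C(halfHypersimplex ι, halfHypersimplex ι) :=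
  ⟨_, continuousOn_retractToMaxTwice.mapsToRestrict fun _ hx => retractToMaxTwice_mem hx⟩

section UniqueMax

variable {x : ι → ℝ} {m : ι} (hm : ∀ k, k ≠ m → x k < x m)
include hm

theorem secondMax_lt_of_unique_max : secondMax x < x m := by
  obtain ⟨i, j, hij, hsec⟩ := exists_secondMax_eq x
  rw [hsec]
  rcases eq_or_ne i m with rfl | him
  · exact (min_le_right _ _).trans_lt (hm j hij.symm)
  · exact (min_le_left _ _).trans_lt (hm i him)

theorem capSecondMax_of_unique_max : capSecondMax x m = secondMax x :=
  min_eq_right (secondMax_lt_of_unique_max hm).le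

theorem capSecondMax_of_ne_unique_max {k : ι} (hk : k ≠ m) : capSecondMax x k = x k :=
  min_eq_left <| by simpa [min_eq_right (hm k hk).le] using min_le_secondMax x hk.symm

theorem sum_capSecondMax_of_unique_max (hx : x ∈ stdSimplex ℝ ι) :
    ∑ k, capSecondMax x k = 1 - x m + secondMax x := by
  classical
  rw [← add_sum_erase _ _ (mem_univ m), ← hx.2, ← add_sum_erase _ x (mem_univ m),
    sum_congr rfl fun k hk => capSecondMax_of_ne_unique_max hm (ne_of_mem_erase hk),
    capSecondMax_of_unique_max hm]
  ring

theorem retractToMaxTwice_apply_le_of_unique_max (hx : x ∈ halfHypersimplex ι) :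
    retractToMaxTwice x m ≤ x m := by
  have hsec := secondMax_lt_of_unique_max hm
  rw [retractToMaxTwice, Pi.smul_apply, smul_eq_mul, capSecondMax_of_unique_max hm,
    inv_mul_le_iff₀ (sum_capSecondMax_pos hx), sum_capSecondMax_of_unique_max hm hx.1]
  nlinarith [hx.2 m]

theorem retractToMaxTwice_apply_of_ne_unique_max {k : ι} (hk : k ≠ m) :
    retractToMaxTwice x k = (∑ l, capSecondMax x l)⁻¹ * x k := by
  simp [retractToMaxTwice, capSecondMax_of_ne_unique_max hm hk]

end UniqueMax

/-- (i) Every point of the simplex at which the maximal coordinate is attained at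
least twice satisfies `max_i x_i ≤ 1/2`, hence `S ⊆ A`;
(ii) every point of `A` with a unique maximal coordinate `x_m` can be moved along a
segment lowering `x_m` and scaling the other coordinates proportionally until the
maximum is attained twice, staying inside `A`;
(iii) the resulting retraction is realized by a continuous map `r : A → A` with
image in `S` fixing `S`. -/
theorem hypersimplex_retraction_to_tropical (n : ℕ) (hn : 2 ≤ n) :
    let Δ : Set (Fin (n + 1) → ℝ) := {x | (∀ i, 0 ≤ x i) ∧ ∑ i, x i = 1}
    let A : Set (Fin (n + 1) → ℝ) := {x ∈ Δ | ∀ i, x i ≤ 1 / 2}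
    let S : Set (Fin (n + 1) → ℝ) :=
      {x ∈ Δ | ∃ i j, i ≠ j ∧ x i = x j ∧ ∀ k, x k ≤ x i}
    (∀ x ∈ Δ, (∃ i j, i ≠ j ∧ x i = x j ∧ ∀ k, x k ≤ x i) → ∀ k, x k ≤ 1 / 2)
    ∧ S ⊆ A
    ∧ (∀ x ∈ A, ∀ m : Fin (n + 1), (∀ k, k ≠ m → x k < x m) →
        ∃ y ∈ S, y ∈ A ∧ segment ℝ x y ⊆ A ∧ y m ≤ x m ∧
          ∃ c : ℝ, 1 ≤ c ∧ ∀ j, j ≠ m → y j = c * x j)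
    ∧ (∃ r : ContinuousMap A A,
        (∀ x : A, ((r x : A) : Fin (n + 1) → ℝ) ∈ S) ∧
        (∀ x : A, (x : Fin (n + 1) → ℝ) ∈ S → r x = x)) := by
  intro Δ A S
  have : Nontrivial (Fin (n + 1)) := Fin.nontrivial_iff_two_le.2 (by omega)
  refine ⟨fun x hx h => MaxAttainedTwice.le_half h hx,
    fun x hx => MaxAttainedTwice.mem_halfHypersimplex hx.2 hx.1, fun x hx m hm => ?_,
    retractToMaxTwiceMap, fun x => ⟨(retractToMaxTwiceMap x).2.1,
      maxAttainedTwice_retractToMaxTwice x.2.1.1⟩,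
    fun x hx => Subtype.ext (retractToMaxTwice_eq_self hx.1 hx.2)⟩
  have hy := retractToMaxTwice_mem hx
  exact ⟨retractToMaxTwice x, ⟨hy.1, maxAttainedTwice_retractToMaxTwice hx.1.1⟩, hy,
    convex_halfHypersimplex.segment_subset hx hy,
    retractToMaxTwice_apply_le_of_unique_max hm hx, _,
    one_le_inv₀ (sum_capSecondMax_pos hx) |>.2 (sum_capSecondMax_le_one hx.1),
    fun j hj => retractToMaxTwice_apply_of_ne_unique_max hm hj⟩
end

section
/- Projected to the torus T^n = (ℝ^{n+1}/ℝ)/2πΛ*, the permutahedron Perm has exactly n! distinct vertices: the (n+1)! vertices ρ_σ̄ = (π/(n+1))[1, 3, ..., 2n+1] (coordinates assigned according to a permutation σ̄ of {0,...,n}) fall into classes of size n+1 under translation by the lattice 2πΛ* = 2π(ℤ^{n+1}/ℤ), two vertices being identified iff their permutations differ by a cyclic rotation. -/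
/-!
The difference of the vertices `ρ σ` and `ρ τ` is `2π/(n+1)` times the integer vector
`σ⁻¹ - τ⁻¹`, so it lies in `2πΛ*` exactly when all entries of `σ⁻¹ - τ⁻¹` are congruent modulo
`n + 1`, i.e. when `σ⁻¹ = τ⁻¹ + j` in `ℤ/(n+1)`; this says that `τ` is `σ` precomposed with the
rotation `k ↦ k + j`. Each rotation class contains exactly one permutation with `τ 0 = 0`, and
there are `n!` of those.
-/

open Real Finset Equiv Nat

theorem exists_const_add_int_mul_iff_modEq {ι : Type*} {N : ℕ} (hN : N ≠ 0) {p : ℝ} (hp : p ≠ 0)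
    (d : ι → ℤ) :
    (∃ c : ℝ, ∃ m : ι → ℤ, ∀ i, p / N * d i = p * m i + c) ↔ ∃ r : ℤ, ∀ i, d i ≡ r [ZMOD N] := by
  constructor
  · rintro ⟨c, m, h⟩
    rcases isEmpty_or_nonempty ι with _ | ⟨⟨i₀⟩⟩
    · exact ⟨0, isEmptyElim⟩
    refine ⟨d i₀, fun i => (Int.modEq_iff_dvd.mpr ⟨m i - m i₀, ?_⟩).symm⟩
    have hi := h i
    have hi₀ := h i₀
    field_simp at hi hi₀
    have : ((d i - d i₀ : ℤ) : ℝ) = ((N * (m i - m i₀) : ℤ) : ℝ) := by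
      push_cast
      apply mul_left_cancel₀ hp
      linear_combination hi - hi₀
    exact_mod_cast this
  · rintro ⟨r, h⟩
    choose m hm using fun i => (h i).symm.dvd
    refine ⟨p / N * r, m, fun i => ?_⟩
    have hdi : (d i : ℝ) = r + N * m i := by
      exact_mod_cast (by linarith [hm i] : d i = r + N * m i)
    rw [hdi]
    field_simp
    ring

open Fin.CommRing in
theorem Fin.exists_val_sub_modEq_iff {ι : Type*} {N : ℕ} [NeZero N] (a b : ι → Fin N) :
    (∃ r : ℤ, ∀ i, ((a i : ℕ) - (b i : ℕ) : ℤ) ≡ r [ZMOD N]) ↔ ∃ j, ∀ i, a i - b i = j := by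
  simp only [← CharP.intCast_eq_intCast (Fin N) N]
  push_cast [Fin.cast_val_eq_self]
  constructor
  · rintro ⟨r, h⟩
    exact ⟨r, h⟩
  · rintro ⟨j, h⟩
    refine ⟨(j : ℕ), fun i => ?_⟩
    rw [h, Int.cast_natCast, Fin.cast_val_eq_self]

theorem Equiv.Perm.exists_symm_sub_eq_iff {N : ℕ} [NeZero N] (σ τ : Perm (Fin N)) :
    (∃ j, ∀ i, σ.symm i - τ.symm i = j) ↔ ∃ j, ∀ k, τ k = σ (k + j) := by
  refine exists_congr fun j => ⟨fun h k => ?_, fun h i => ?_⟩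
  · rw [← h (τ k), symm_apply_apply, add_sub_cancel, apply_symm_apply]
  · obtain ⟨k, rfl⟩ := τ.surjective i
    rw [τ.symm_apply_apply, h, σ.symm_apply_apply, add_sub_cancel_left]

theorem exists_vertex_sub_eq_iff (n : ℕ) (σ τ : Perm (Fin (n + 1))) :
    (∃ c : ℝ, ∃ m : Fin (n + 1) → ℤ, ∀ i,
        π / (n + 1) * (2 * (σ.symm i : ℕ) + 1) - π / (n + 1) * (2 * (τ.symm i : ℕ) + 1)
          = 2 * π * m i + c) ↔
      ∃ j, ∀ k, τ k = σ (k + j) := by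
  have hvert : ∀ i,
      π / (n + 1) * (2 * (σ.symm i : ℕ) + 1) - π / (n + 1) * (2 * (τ.symm i : ℕ) + 1)
        = 2 * π / ((n + 1 : ℕ) : ℝ) * (((σ.symm i : ℕ) - (τ.symm i : ℕ) : ℤ) : ℝ) := by
    intro i; push_cast; ring
  simp only [hvert]
  rw [exists_const_add_int_mul_iff_modEq (Nat.succ_ne_zero n) (by positivity),
    Fin.exists_val_sub_modEq_iff, Perm.exists_symm_sub_eq_iff]

theorem Equiv.Perm.existsUnique_rotate_apply_zero {N : ℕ} [NeZero N] (σ : Perm (Fin N)) :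
    ∃! τ : Perm (Fin N), τ 0 = 0 ∧ ∃ j, ∀ k, τ k = σ (k + j) := by
  refine ⟨(Equiv.addRight (σ.symm 0)).trans σ, ⟨by simp, σ.symm 0, fun k => rfl⟩, ?_⟩
  rintro τ ⟨hτ0, j, hτ⟩
  obtain rfl : j = σ.symm 0 := by rw [← hτ0, hτ, zero_add, symm_apply_apply]
  ext k
  rw [hτ]
  rfl

theorem Equiv.Perm.decomposeFin_fst {n : ℕ} (τ : Perm (Fin (n + 1))) :
    (decomposeFin τ).1 = τ 0 := by
  conv_rhs => rw [← decomposeFin.symm_apply_apply τ]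
  exact (decomposeFin_symm_apply_zero _ _).symm

theorem Equiv.Perm.card_filter_apply_zero_eq_zero (n : ℕ) :
    #{τ : Perm (Fin (n + 1)) | τ 0 = 0} = n ! := by
  rw [← Fintype.card_subtype,
    Fintype.card_congr (decomposeFin.subtypeEquiv (q := fun x => x.1 = 0)
      fun τ => by rw [decomposeFin_fst]),
    Fintype.card_congr ((prodSubtypeFstEquivSubtypeProd (p := fun a : Fin (n + 1) => a = 0)).trans
      (uniqueProd _ _))]
  convert Fintype.card_perm (α := Fin n)
  simp

theorem perm_vertices_in_torus_general (n : ℕ) :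
    let ρ : Equiv.Perm (Fin (n + 1)) → Fin (n + 1) → ℝ :=
      fun σ i => π / (n + 1) * (2 * ((σ.symm i : Fin (n + 1)) : ℕ) + 1)
    let R : Equiv.Perm (Fin (n + 1)) → Equiv.Perm (Fin (n + 1)) → Prop :=
      fun σ τ => ∃ c : ℝ, ∃ mm : Fin (n + 1) → ℤ,
        ∀ i, ρ σ i - ρ τ i = 2 * π * mm i + c
    (∀ σ τ : Equiv.Perm (Fin (n + 1)),
        R σ τ ↔ ∃ j : Fin (n + 1), ∀ k : Fin (n + 1), τ k = σ (k + j))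
    ∧ ∃ T : Finset (Equiv.Perm (Fin (n + 1))), T.card = Nat.factorial n ∧
        ∀ σ : Equiv.Perm (Fin (n + 1)), ∃! τ, τ ∈ T ∧ R σ τ := by
  intro ρ R
  have hR : ∀ σ τ, R σ τ ↔ ∃ j : Fin (n + 1), ∀ k, τ k = σ (k + j) := exists_vertex_sub_eq_iff n
  refine ⟨hR, ({τ | τ 0 = 0} : Finset (Perm (Fin (n + 1)))),
    Perm.card_filter_apply_zero_eq_zero n, fun σ => ?_⟩
  simpa only [mem_filter, mem_univ, true_and, hR] using σ.existsUnique_rotate_apply_zero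

/-- The vertices `ρ_σ̄` of the permutahedron (with coordinates `x_{i_k} = (π/(n+1))(2k+1)`
for a permutation `σ̄ = (i_0,…,i_n)`) become identified in the torus
`(ℝ^{n+1}/ℝ)/2πΛ*` exactly when the permutations differ by a cyclic shift; hence the
`(n+1)!` vertices fall into classes of size `n+1` and the permutahedron has exactly
`n!` distinct vertices in the torus. -/
theorem perm_vertices_in_torus (n : ℕ) (hn : 1 ≤ n) :
    let ρ : Equiv.Perm (Fin (n + 1)) → Fin (n + 1) → ℝ :=
      fun σ i => π / (n + 1) * (2 * ((σ.symm i : Fin (n + 1)) : ℕ) + 1)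
    let R : Equiv.Perm (Fin (n + 1)) → Equiv.Perm (Fin (n + 1)) → Prop :=
      fun σ τ => ∃ c : ℝ, ∃ mm : Fin (n + 1) → ℤ,
        ∀ i, ρ σ i - ρ τ i = 2 * π * mm i + c
    (∀ σ τ : Equiv.Perm (Fin (n + 1)),
        R σ τ ↔ ∃ j : Fin (n + 1), ∀ k : Fin (n + 1), τ k = σ (k + j))
    ∧ ∃ T : Finset (Equiv.Perm (Fin (n + 1))), T.card = Nat.factorial n ∧
        ∀ σ : Equiv.Perm (Fin (n + 1)), ∃! τ, τ ∈ T ∧ R σ τ :=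
  perm_vertices_in_torus_general n
end

section
/- In the dualizing subdivision of the simplex Δ, the cell Δ_{I'J'} is a face of the cell Δ_{IJ} if and only if I ⊆ I' ⊆ J' ⊆ J, where Δ_{IJ} = Conv{ barycenter of Δ_K : I ⊆ K ⊆ J } for nonempty I ⊆ J ⊆ {0,...,n}; moreover Δ_{IJ} is a polytope of dimension |J| − |I| combinatorially isomorphic to a cube of that dimension. -/
/-!
Dividing by the coordinate sum maps the cube `Q_{IJ} = {z | z = 1 on I, 0 ≤ z ≤ 1 on J \ I,
z = 0 off J}` onto `Δ_{IJ}`: the cube is the convex hull of the indicator vectors of the sets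
`I ⊆ K ⊆ J`, these normalize to the barycenters, and normalization carries convex hulls to convex
hulls of the normalized points. Every point of `Δ_{IJ}` lies in the simplex, vanishes off `J` and
takes its largest value on all of `I`; so the map is inverted by dividing by a coordinate in `I`,
and the barycenter of `Δ_K` lies in `Δ_{IJ}` only if `I ⊆ K ⊆ J`, which gives the face relation.
-/

open Finset

/-- If `x = ∑ wᵢ • zᵢ`, then `(φ x)⁻¹ • x = ∑ (wᵢ * φ zᵢ / φ x) • (φ zᵢ)⁻¹ • zᵢ`. -/
theorem inv_smul_mem_convexHull_image {𝕜 E : Type*} [Field 𝕜] [LinearOrder 𝕜]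
    [IsStrictOrderedRing 𝕜] [AddCommGroup E] [Module 𝕜 E] (φ : E →ₗ[𝕜] 𝕜) {s : Set E}
    (hs : ∀ v ∈ s, 0 < φ v) {x : E} (hx : x ∈ convexHull 𝕜 s) :
    (φ x)⁻¹ • x ∈ convexHull 𝕜 ((fun v => (φ v)⁻¹ • v) '' s) := by
  have hpos : 0 < φ x := convexHull_min hs (convex_halfSpace_gt φ.isLinear 0) hx
  rw [_root_.convexHull_eq] at hx
  obtain ⟨κ, t, w, z, hw₀, hw₁, hz, rfl⟩ := hx
  have hφ : φ (t.centerMass w z) = ∑ i ∈ t, w i * φ (z i) := by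
    simp [Finset.centerMass_eq_of_sum_1 _ _ hw₁, map_sum]
  have hmem := t.centerMass_mem_convexHull (w := fun i => w i * φ (z i))
    (z := fun i => (φ (z i))⁻¹ • z i)
    (fun i hi => mul_nonneg (hw₀ i hi) (hs _ (hz i hi)).le) (hφ ▸ hpos)
    (s := (fun v => (φ v)⁻¹ • v) '' s) (fun i hi => Set.mem_image_of_mem _ (hz i hi))
  convert hmem using 1
  conv_rhs => rw [Finset.centerMass]
  rw [← hφ, t.centerMass_eq_of_sum_1 _ hw₁]
  congr 1
  refine Finset.sum_congr rfl fun i hi => ?_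
  rw [smul_smul, mul_assoc, mul_inv_cancel₀ (hs _ (hz i hi)).ne', mul_one]

namespace DualizingSubdivision

variable {ι : Type*}

section Cube

variable [DecidableEq ι]

def cubeFace (I J : Finset ι) : Set (ι → ℝ) :=
  Set.univ.pi fun i => if i ∈ I then {1} else if i ∈ J then Set.Icc 0 1 else {0}

def cubeVertices (I J : Finset ι) : Set (ι → ℝ) :=
  Set.univ.pi fun i => if i ∈ I then {1} else if i ∈ J then {0, 1} else {0}

/-- The absolute value keeps the coordinate sum `≥ 1` off the cube, so that the normalized
chart is continuous everywhere. -/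
def cubeChart (I J : Finset ι) (y : (J \ I : Finset ι) → ℝ) : ι → ℝ :=
  fun i => if i ∈ I then 1 else if h : i ∈ J \ I then |y ⟨i, h⟩| else 0

theorem cubeChart_mem_cubeFace {I J : Finset ι} {y : (J \ I : Finset ι) → ℝ}
    (hy : ∀ j, y j ∈ Set.Icc (0 : ℝ) 1) :
    cubeChart I J y ∈ cubeFace I J := by
  intro i _
  by_cases hiI : i ∈ I
  · simp [cubeChart, hiI]
  by_cases hiJ : i ∈ J
  · have hiJI : i ∈ J \ I := mem_sdiff.2 ⟨hiJ, hiI⟩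
    simpa [cubeChart, hiI, hiJ, hiJI, abs_of_nonneg (hy _).1] using hy ⟨i, hiJI⟩
  · simp [cubeChart, hiI, hiJ]

end Cube

variable [Fintype ι]

structure CellInequalities (I J : Finset ι) (x : ι → ℝ) : Prop where
  nonneg : ∀ i, 0 ≤ x i
  sum_eq_one : ∑ i, x i = 1
  le_of_mem : ∀ i ∈ I, ∀ j, x j ≤ x i
  eq_zero_of_notMem : ∀ j ∉ J, x j = 0

namespace CellInequalities

variable {I J : Finset ι} {x : ι → ℝ}

theorem apply_eq (hx : CellInequalities I J x) {i i' : ι} (hi : i ∈ I) (hi' : i' ∈ I) :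
    x i = x i' :=
  le_antisymm (hx.le_of_mem i' hi' i) (hx.le_of_mem i hi i')

theorem pos (hx : CellInequalities I J x) {i : ι} (hi : i ∈ I) : 0 < x i := by
  by_contra! h
  have hzero : ∀ j, x j = 0 := fun j => le_antisymm ((hx.le_of_mem i hi j).trans h) (hx.nonneg j)
  simpa [hzero] using hx.sum_eq_one

end CellInequalities

theorem convex_setOf_cellInequalities (I J : Finset ι) :
    Convex ℝ {x | CellInequalities I J x} := by
  intro x hx y hy a b ha hb hab
  refine ⟨fun i => ?_, ?_, fun i hi j => ?_, fun j hj => ?_⟩ <;>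
    simp only [Pi.add_apply, Pi.smul_apply, smul_eq_mul]
  · exact add_nonneg (mul_nonneg ha (hx.nonneg i)) (mul_nonneg hb (hy.nonneg i))
  · rw [Finset.sum_add_distrib, ← Finset.mul_sum, ← Finset.mul_sum, hx.sum_eq_one,
      hy.sum_eq_one, mul_one, mul_one, hab]
  · exact add_le_add (mul_le_mul_of_nonneg_left (hx.le_of_mem i hi j) ha)
      (mul_le_mul_of_nonneg_left (hy.le_of_mem i hi j) hb)
  · rw [hx.eq_zero_of_notMem j hj, hy.eq_zero_of_notMem j hj, mul_zero, mul_zero, add_zero]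

noncomputable def sumNormalize (x : ι → ℝ) : ι → ℝ := (∑ i, x i)⁻¹ • x

theorem sumNormalize_smul {c : ℝ} (hc : c ≠ 0) (x : ι → ℝ) :
    sumNormalize (c • x) = sumNormalize x := by
  simp only [sumNormalize, Pi.smul_apply, smul_eq_mul, ← Finset.mul_sum, smul_smul]
  rw [mul_inv, mul_right_comm, inv_mul_cancel₀ hc, one_mul]

theorem sumNormalize_of_sum_eq_one {x : ι → ℝ} (hx : ∑ i, x i = 1) : sumNormalize x = x := by
  simp [sumNormalize, hx]

variable [DecidableEq ι]

noncomputable def barycenter (K : Finset ι) (i : ι) : ℝ := if i ∈ K then (1 : ℝ) / K.card else 0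

def cell (I J : Finset ι) : Set (ι → ℝ) :=
  convexHull ℝ {x | ∃ K : Finset ι, I ⊆ K ∧ K ⊆ J ∧ x = barycenter K}

theorem cellInequalities_barycenter {I J K : Finset ι} (hIK : I ⊆ K) (hKJ : K ⊆ J)
    (hK : K.Nonempty) : CellInequalities I J (barycenter K) where
  nonneg i := by unfold barycenter; split_ifs <;> positivity
  sum_eq_one := by simp [barycenter, Finset.sum_ite_mem, hK.card_pos.ne']
  le_of_mem i hi j := by
    unfold barycenter
    split_ifs with hjK hiK <;> first | rfl | positivity | exact absurd (hIK hi) hiK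
  eq_zero_of_notMem j hj := if_neg fun hjK => hj (hKJ hjK)

theorem subset_of_cellInequalities_barycenter {I J K : Finset ι}
    (h : CellInequalities I J (barycenter K)) (hK : K.Nonempty) : I ⊆ K ∧ K ⊆ J := by
  have hpos : (0 : ℝ) < 1 / K.card := by have := hK.card_pos; positivity
  obtain ⟨k, hk⟩ := hK
  constructor
  · intro i hi
    by_contra hiK
    have := h.le_of_mem i hi k
    simp only [barycenter, hk, hiK, if_true, if_false] at this
    linarith
  · intro j hjK
    by_contra hjJ
    have := h.eq_zero_of_notMem j hjJ
    simp only [barycenter, hjK, if_true] at this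
    linarith

theorem cell_subset_setOf_cellInequalities {I : Finset ι} (hI : I.Nonempty) (J : Finset ι) :
    cell I J ⊆ {x | CellInequalities I J x} :=
  convexHull_min
    (by rintro _ ⟨K, hIK, hKJ, rfl⟩; exact cellInequalities_barycenter hIK hKJ (hI.mono hIK))
    (convex_setOf_cellInequalities I J)

theorem cell_subset_cell_iff {I J I' J' : Finset ι} (hI : I.Nonempty) (hI' : I'.Nonempty)
    (hI'J' : I' ⊆ J') : cell I' J' ⊆ cell I J ↔ I ⊆ I' ∧ J' ⊆ J := by
  constructor
  · intro h
    have hmem {K} (hI'K : I' ⊆ K) (hKJ' : K ⊆ J') : CellInequalities I J (barycenter K) :=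
      cell_subset_setOf_cellInequalities hI J (h (subset_convexHull ℝ _ ⟨K, hI'K, hKJ', rfl⟩))
    exact ⟨(subset_of_cellInequalities_barycenter (hmem subset_rfl hI'J') hI').1,
      (subset_of_cellInequalities_barycenter (hmem hI'J' subset_rfl) (hI'.mono hI'J')).2⟩
  · rintro ⟨hII', hJ'J⟩
    exact convexHull_mono fun _ ⟨K, hI'K, hKJ', hx⟩ => ⟨K, hII'.trans hI'K, hKJ'.trans hJ'J, hx⟩

theorem convexHull_cubeVertices (I J : Finset ι) :
    convexHull ℝ (cubeVertices I J) = cubeFace I J := by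
  rw [cubeVertices, convexHull_pi, cubeFace]
  congr 1 with i
  split_ifs <;> simp [convexHull_pair, segment_eq_Icc]

theorem cubeVertices_subset {I J : Finset ι} (hIJ : I ⊆ J) :
    cubeVertices I J ⊆
      {v | ∃ K : Finset ι, I ⊆ K ∧ K ⊆ J ∧ v = fun i => if i ∈ K then 1 else 0} := by
  intro v hv
  have hv' (i : ι) : (i ∈ I → v i = 1) ∧ (i ∉ J → v i = 0) ∧ (v i = 0 ∨ v i = 1) := by
    have := hv i (Set.mem_univ i)
    by_cases hiI : i ∈ I
    · simp_all [hIJ hiI]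
    · by_cases hiJ : i ∈ J <;> simp_all
  refine ⟨univ.filter (v · = 1), fun i hi => mem_filter.2 ⟨mem_univ i, (hv' i).1 hi⟩,
    fun i hi => ?_, funext fun i => ?_⟩
  · by_contra hiJ
    have := (mem_filter.1 hi).2
    rw [(hv' i).2.1 hiJ] at this
    exact zero_ne_one this
  · rcases (hv' i).2.2 with h | h <;> simp [h]

theorem sumNormalize_mem_cell {I J : Finset ι} (hI : I.Nonempty) (hIJ : I ⊆ J) {z : ι → ℝ}
    (hz : z ∈ cubeFace I J) : sumNormalize z ∈ cell I J := by
  let φ : (ι → ℝ) →ₗ[ℝ] ℝ := ∑ i, LinearMap.proj i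
  have hφ (x : ι → ℝ) : φ x = ∑ i, x i := by simp [φ]
  have hmem := inv_smul_mem_convexHull_image φ ?_
    (convexHull_mono (cubeVertices_subset hIJ) (convexHull_cubeVertices I J ▸ hz))
  · rw [hφ] at hmem
    refine convexHull_mono ?_ hmem
    rintro _ ⟨_, ⟨K, hIK, hKJ, rfl⟩, rfl⟩
    refine ⟨K, hIK, hKJ, funext fun i => ?_⟩
    simp [hφ, barycenter, Finset.sum_ite_mem]
  · rintro _ ⟨K, hIK, -, rfl⟩
    simpa [hφ, Finset.sum_ite_mem] using (hI.mono hIK).card_pos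

noncomputable def cellChart (I J : Finset ι) (i₀ : ι) (x : ι → ℝ) : (J \ I : Finset ι) → ℝ :=
  fun j => x j / x i₀

variable {I J : Finset ι}

theorem one_le_sum_cubeChart (hI : I.Nonempty) (y : (J \ I : Finset ι) → ℝ) :
    1 ≤ ∑ i, cubeChart I J y i := by
  obtain ⟨i₀, hi₀⟩ := hI
  have hnonneg (i : ι) : 0 ≤ cubeChart I J y i := by
    unfold cubeChart; split_ifs <;> positivity
  simpa [cubeChart, hi₀] using single_le_sum (fun i _ => hnonneg i) (mem_univ i₀)

theorem continuous_sumNormalize_cubeChart (hI : I.Nonempty) :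
    Continuous fun y => sumNormalize (cubeChart I J y) := by
  have hchart : Continuous (cubeChart I J) := continuous_pi fun i => by
    unfold cubeChart
    split_ifs <;> fun_prop
  exact ((continuous_finsetSum _ fun i _ => (continuous_apply i).comp hchart).inv₀
    fun y => (zero_lt_one.trans_le (one_le_sum_cubeChart hI y)).ne').smul hchart

theorem cellChart_mem_cube {i₀ : ι} (hi₀ : i₀ ∈ I) {x : ι → ℝ} (hx : CellInequalities I J x)
    (j : (J \ I : Finset ι)) : cellChart I J i₀ x j ∈ Set.Icc (0 : ℝ) 1 :=
  ⟨div_nonneg (hx.nonneg j) (hx.pos hi₀).le, (div_le_one (hx.pos hi₀)).2 (hx.le_of_mem i₀ hi₀ j)⟩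

theorem cellChart_sumNormalize_cubeChart {i₀ : ι} (hi₀ : i₀ ∈ I) {y : (J \ I : Finset ι) → ℝ}
    (hy : ∀ j, y j ∈ Set.Icc (0 : ℝ) 1) :
    cellChart I J i₀ (sumNormalize (cubeChart I J y)) = y := by
  have hS := (zero_lt_one.trans_le (one_le_sum_cubeChart ⟨i₀, hi₀⟩ y)).ne'
  funext j
  have hi₀_eq : cubeChart I J y i₀ = 1 := if_pos hi₀
  have hj_eq : cubeChart I J y j = y j := by
    simp [cubeChart, (mem_sdiff.1 j.2).2, j.2, abs_of_nonneg (hy j).1]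
  simp only [cellChart, sumNormalize, Pi.smul_apply, smul_eq_mul, hi₀_eq, hj_eq]
  field_simp

theorem sumNormalize_cubeChart_cellChart {i₀ : ι} (hi₀ : i₀ ∈ I) {x : ι → ℝ}
    (hx : CellInequalities I J x) : sumNormalize (cubeChart I J (cellChart I J i₀ x)) = x := by
  have hpos := hx.pos hi₀
  have hchart : cubeChart I J (cellChart I J i₀ x) = (x i₀)⁻¹ • x := by
    funext i
    by_cases hiI : i ∈ I
    · simp [cubeChart, hiI, hx.apply_eq hiI hi₀, hpos.ne']
    by_cases hiJ : i ∈ J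
    · have hiJI : i ∈ J \ I := mem_sdiff.2 ⟨hiJ, hiI⟩
      simp [cubeChart, cellChart, hiI, hiJI, abs_of_nonneg (hx.nonneg i), abs_of_pos hpos,
        div_eq_inv_mul]
    · simp [cubeChart, hiI, hiJ, hx.eq_zero_of_notMem i hiJ]
  rw [hchart, sumNormalize_smul (inv_ne_zero hpos.ne'), sumNormalize_of_sum_eq_one hx.sum_eq_one]

theorem bijOn_sumNormalize_cubeChart {i₀ : ι} (hi₀ : i₀ ∈ I) (hIJ : I ⊆ J) :
    Set.BijOn (fun y => sumNormalize (cubeChart I J y)) {y | ∀ j, y j ∈ Set.Icc (0 : ℝ) 1}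
      (cell I J) :=
  Set.InvOn.bijOn (f' := cellChart I J i₀)
    ⟨fun _ hy => cellChart_sumNormalize_cubeChart hi₀ hy,
      fun _ hx => sumNormalize_cubeChart_cellChart hi₀
        (cell_subset_setOf_cellInequalities ⟨i₀, hi₀⟩ J hx)⟩
    (fun _ hy => sumNormalize_mem_cell ⟨i₀, hi₀⟩ hIJ (cubeChart_mem_cubeFace hy))
    (fun _ hx => cellChart_mem_cube hi₀ (cell_subset_setOf_cellInequalities ⟨i₀, hi₀⟩ J hx))

end DualizingSubdivision

/-- The cells of the dualizing subdivision of the simplex `Δ`: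
`Δ_{IJ} = Conv{barycenter of Δ_K : I ⊆ K ⊆ J}` for nonempty `I ⊆ J ⊆ {0,…,n}`.
(a) `Δ_{IJ}` is a copy of a cube of dimension `|J \ I|` (there is a continuous
bijection from the cube `[0,1]^{J\I}` onto it);
(b) `Δ_{I'J'}` is a face of (in particular, contained in) `Δ_{IJ}` iff
`I ⊆ I' ⊆ J' ⊆ J`. -/
theorem dualizing_subdivision_cells (n : ℕ)
    (bary : Finset (Fin (n + 1)) → (Fin (n + 1) → ℝ))
    (hbary : ∀ K, ∀ i, bary K i = if i ∈ K then (1 : ℝ) / K.card else 0)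
    (cell : Finset (Fin (n + 1)) → Finset (Fin (n + 1)) → Set (Fin (n + 1) → ℝ))
    (hcell : ∀ I J, cell I J =
      convexHull ℝ {x | ∃ K : Finset (Fin (n + 1)), I ⊆ K ∧ K ⊆ J ∧ x = bary K})
    (I J : Finset (Fin (n + 1))) (hI : I.Nonempty) (hIJ : I ⊆ J) :
    (∃ f : (((J \ I : Finset (Fin (n + 1))) : Type) → ℝ) → (Fin (n + 1) → ℝ),
        Continuous f ∧
        Set.BijOn f {y | ∀ j, y j ∈ Set.Icc (0 : ℝ) 1} (cell I J))
    ∧ (∀ I' J' : Finset (Fin (n + 1)), I'.Nonempty → I' ⊆ J' →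
        (cell I' J' ⊆ cell I J ↔ (I ⊆ I' ∧ J' ⊆ J))) := by
  obtain rfl : bary = DualizingSubdivision.barycenter := funext fun K => funext (hbary K)
  obtain rfl : cell = DualizingSubdivision.cell := funext fun I => funext (hcell I)
  obtain ⟨i₀, hi₀⟩ := hI
  exact ⟨⟨_, DualizingSubdivision.continuous_sumNormalize_cubeChart ⟨i₀, hi₀⟩,
    DualizingSubdivision.bijOn_sumNormalize_cubeChart hi₀ hIJ⟩,
    fun _ _ hI' hI'J' => DualizingSubdivision.cell_subset_cell_iff ⟨i₀, hi₀⟩ hI' hI'J'⟩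
end
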